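/- arXiv:1811.08240 — 7 statements merged into one kernel-verified Lean document; each statement's English description precedes it below -/
import Mathlib

section
/- A morphism [m] : 𝒳 → 𝒴 in the category of equilogical spaces is a monomorphism if and only if for all x, x' in X one has x ≡_X x' ⟺ m(x) ≡_Y m(x'). -/
universe u

/-- An equilogical space: a topological space together with an equivalence
relation on its underlying set. -/
structure EquObj : Type (u + 1) where
  carrier : Type u
  top : TopologicalSpace carrier
  rel : carrier → carrier → Prop
  iseqv : Equivalence rel

attribute [instance] EquObj.top

/-- An equivariant continuous map between equilogical spaces. -/
def IsEquiMap (A B : EquObj.{u}) (f : A.carrier → B.carrier) : Prop :=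
  Continuous f ∧ ∀ a a', A.rel a a' → B.rel (f a) (f a')

/-- The relation identifying two equivariant maps, i.e. equality of the
corresponding morphisms `[f] = [g]` of equilogical spaces. -/
def MorEquiv (A B : EquObj.{u}) (f g : A.carrier → B.carrier) : Prop :=
  ∀ a a', A.rel a a' → B.rel (f a) (g a')

/-- a morphism `[m] : 𝒳 → 𝒴` of equilogical spaces is a monomorphism
iff for all `x, x'` in `X`, `x ≡_X x' ↔ m x ≡_Y m x'`. -/
theorem stmt2 (X Y : EquObj.{u}) (m : X.carrier → Y.carrier) (hm : IsEquiMap X Y m) :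
    (∀ (W : EquObj.{u}) (h k : W.carrier → X.carrier),
        IsEquiMap W X h → IsEquiMap W X k →
        MorEquiv W Y (fun w => m (h w)) (fun w => m (k w)) → MorEquiv W X h k) ↔
      ∀ x x', X.rel x x' ↔ Y.rel (m x) (m x') := by
  constructor
  · intro mono x x'
    constructor
    · exact fun hx => hm.2 x x' hx
    · intro hy
      let W : EquObj.{u} :=
        ⟨PUnit, ⊥, fun _ _ => True, ⟨fun _ => trivial, fun _ => trivial, fun _ _ => trivial⟩⟩
      have := mono W (fun _ => x) (fun _ => x')
        ⟨continuous_const, fun _ _ _ => X.iseqv.refl x⟩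
        ⟨continuous_const, fun _ _ _ => X.iseqv.refl x'⟩
        (fun _ _ _ => hy)
      exact this PUnit.unit PUnit.unit trivial
  · intro hiff W h k hh hk hmor a a' ha
    exact (hiff (h a) (k a')).2 (hmor a a' ha)
end

section
/- A morphism [f] : 𝒳 → 𝒴 in the category of equilogical spaces is an epimorphism if and only if for all y, y' in Y: y ≡_Y y' ⟺ there exist x, x' in X with x ≡_X x', y ≡_Y f(x), f(x) ≡_Y f(x'), and f(x') ≡_Y y'. -/
universe u

/-- a morphism `[f] : 𝒳 → 𝒴` of equilogical spaces is an epimorphism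
iff for all `y, y'` in `Y`: `y ≡_Y y'` ⟺ there exist `x, x'` in `X` with
`x ≡_X x'`, `y ≡_Y f x`, `f x ≡_Y f x'` and `f x' ≡_Y y'`. -/
theorem stmt3 (X Y : EquObj.{u}) (f : X.carrier → Y.carrier) (hf : IsEquiMap X Y f) :
    (∀ (W : EquObj.{u}) (h k : Y.carrier → W.carrier),
        IsEquiMap Y W h → IsEquiMap Y W k →
        MorEquiv X W (fun x => h (f x)) (fun x => k (f x)) → MorEquiv Y W h k) ↔
      ∀ y y', Y.rel y y' ↔ ∃ x x', X.rel x x' ∧ Y.rel y (f x) ∧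
        Y.rel (f x) (f x') ∧ Y.rel (f x') y' := by
  constructor
  · intro hepi y y'
    constructor
    · intro hyy'
      set W : EquObj.{u} :=
        ⟨ULift Prop, ⊤, fun p q => p.down ↔ q.down,
          ⟨fun _ => Iff.rfl, Iff.symm, Iff.trans⟩⟩ with hW
      have key := hepi W (fun z => ⟨∃ x, Y.rel z (f x)⟩) (fun _ => ⟨True⟩)
        ⟨continuous_top, fun a a' hr =>
          ⟨fun ⟨x, hx⟩ => ⟨x, Y.iseqv.trans (Y.iseqv.symm hr) hx⟩,
           fun ⟨x, hx⟩ => ⟨x, Y.iseqv.trans hr hx⟩⟩⟩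
        ⟨continuous_top, fun _ _ _ => Iff.rfl⟩
        (fun a _ _ => ⟨fun _ => trivial, fun _ => ⟨a, Y.iseqv.refl _⟩⟩)
      obtain ⟨x, hx⟩ := (key y y (Y.iseqv.refl y)).mpr trivial
      exact ⟨x, x, X.iseqv.refl x, hx, Y.iseqv.refl _,
        Y.iseqv.trans (Y.iseqv.symm hx) hyy'⟩
    · rintro ⟨x, x', _, h1, h2, h3⟩
      exact Y.iseqv.trans h1 (Y.iseqv.trans h2 h3)
  · intro hc W h k hh hk hcomp y y' hyy'
    obtain ⟨x, x', hxx', h1, _, h3⟩ := (hc y y').mp hyy'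
    exact W.iseqv.trans (hh.2 _ _ h1)
      (W.iseqv.trans (hcomp x x' hxx') (hk.2 _ _ h3))
end

section
/- The category of equilogical spaces has equalizers: given [f], [g] : 𝒳 → 𝒴, the subspace E = { x ∈ X | f(x) ≡_Y g(x) } with the restricted equivalence relation, together with the class of the inclusion, is an equalizer of [f] and [g]. -/
universe u

/-- The equalizer object `E = { x ∈ X | f x ≡_Y g x }`, with the subspace
topology and the restriction of `≡_X`. -/
def eqObj (X Y : EquObj.{u}) (f g : X.carrier → Y.carrier) : EquObj.{u} where
  carrier := {x : X.carrier // Y.rel (f x) (g x)}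
  top := instTopologicalSpaceSubtype
  rel a b := X.rel a.1 b.1
  iseqv :=
    ⟨fun a => X.iseqv.refl a.1, fun h => X.iseqv.symm h, fun h h' => X.iseqv.trans h h'⟩

/-- the category of equilogical spaces has equalizers: given
`[f], [g] : 𝒳 → 𝒴`, the subspace `E = { x | f x ≡_Y g x }` with the restricted
relation, together with the class of the inclusion, is an equalizer of `[f]` and
`[g]`: the inclusion is a morphism equalizing `[f]` and `[g]`, and every
morphism equalizing them factors through it uniquely (as morphism classes). -/
theorem stmt5 (X Y : EquObj.{u}) (f g : X.carrier → Y.carrier)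
    (hf : IsEquiMap X Y f) (hg : IsEquiMap X Y g) :
    IsEquiMap (eqObj X Y f g) X (fun e => e.1) ∧
    MorEquiv (eqObj X Y f g) Y (fun e => f e.1) (fun e => g e.1) ∧
    ∀ (W : EquObj.{u}) (h : W.carrier → X.carrier), IsEquiMap W X h →
      MorEquiv W Y (fun w => f (h w)) (fun w => g (h w)) →
      ∃ k : W.carrier → (eqObj X Y f g).carrier,
        IsEquiMap W (eqObj X Y f g) k ∧
        MorEquiv W X (fun w => (k w).1) h ∧
        ∀ k' : W.carrier → (eqObj X Y f g).carrier,
          IsEquiMap W (eqObj X Y f g) k' →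
          MorEquiv W X (fun w => (k' w).1) h →
          MorEquiv W (eqObj X Y f g) k k' := by
  refine ⟨⟨continuous_subtype_val, fun a a' h => h⟩, fun a a' h => Y.iseqv.trans a.2 (hg.2 _ _ h), ?_⟩
  intro W h hh heq
  refine ⟨fun w => ⟨h w, heq w w (W.iseqv.refl w)⟩, ⟨?_, fun a a' r => hh.2 a a' r⟩,
    fun a a' r => hh.2 a a' r, fun k' hk' hk'h a a' r => ?_⟩
  · exact Continuous.subtype_mk hh.1 _
  · exact X.iseqv.trans (hh.2 a a' r) (X.iseqv.symm (hk'h a' a' (W.iseqv.refl a')))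
end

section
/- The category of equilogical spaces has coequalizers: given [f], [g] : 𝒳 → 𝒴, the object (Y, ≈) — where ≈ is the smallest equivalence relation on Y containing ≡_Y and identifying f(x) with g(x') for all x ≡_X x' — together with the class of the identity map on Y, is a coequalizer of [f] and [g]. -/
universe u

/-- The coequalizer object: `Y` with the smallest equivalence relation `≈`
containing `≡_Y` and identifying `f x` with `g x'` whenever `x ≡_X x'`. -/
def coeqObj (X Y : EquObj.{u}) (f g : X.carrier → Y.carrier) : EquObj.{u} where
  carrier := Y.carrier
  top := Y.top
  rel := Relation.EqvGen
    (fun y y' => Y.rel y y' ∨ ∃ x x', X.rel x x' ∧ y = f x ∧ y' = g x')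
  iseqv := Relation.EqvGen.is_equivalence _

/-- the category of equilogical spaces has coequalizers: given
`[f], [g] : 𝒳 → 𝒴`, the object `(Y, ≈)` together with the class of the identity
map on `Y` is a coequalizer of `[f]` and `[g]`: the identity is a morphism
coequalizing `[f]` and `[g]`, and every morphism coequalizing them factors
through it uniquely (as morphism classes). -/
theorem stmt6 (X Y : EquObj.{u}) (f g : X.carrier → Y.carrier)
    (hf : IsEquiMap X Y f) (hg : IsEquiMap X Y g) :
    IsEquiMap Y (coeqObj X Y f g) (fun y => y) ∧
    MorEquiv X (coeqObj X Y f g) f g ∧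
    ∀ (W : EquObj.{u}) (h : Y.carrier → W.carrier), IsEquiMap Y W h →
      MorEquiv X W (fun x => h (f x)) (fun x => h (g x)) →
      ∃ k : (coeqObj X Y f g).carrier → W.carrier,
        IsEquiMap (coeqObj X Y f g) W k ∧
        MorEquiv Y W (fun y => k y) h ∧
        ∀ k' : (coeqObj X Y f g).carrier → W.carrier,
          IsEquiMap (coeqObj X Y f g) W k' →
          MorEquiv Y W (fun y => k' y) h →
          MorEquiv (coeqObj X Y f g) W k k' := by
  refine ⟨⟨continuous_id, fun a a' h => Relation.EqvGen.rel _ _ (Or.inl h)⟩,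
    fun a a' h => Relation.EqvGen.rel _ _ (Or.inr ⟨a, a', h, rfl, rfl⟩),
    fun W h hh hfg => ?_⟩
  have key : ∀ y y', (coeqObj X Y f g).rel y y' → W.rel (h y) (h y') := by
    intro y y' hr
    induction hr with
    | rel a b hab =>
      rcases hab with hab | ⟨x, x', hx, rfl, rfl⟩
      · exact hh.2 _ _ hab
      · exact hfg x x' hx
    | refl a => exact W.iseqv.refl _
    | symm a b _ ih => exact W.iseqv.symm ih
    | trans a b c _ _ ih1 ih2 => exact W.iseqv.trans ih1 ih2
  refine ⟨h, ⟨hh.1, key⟩, fun y y' hy => hh.2 _ _ hy, fun k' hk' hk'h y y' hy => ?_⟩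
  exact W.iseqv.trans (key y y' hy)
    (W.iseqv.symm (hk'h y' y' (Y.iseqv.refl _)))
end

section
/- A partially ordered set P is an injective object in the category of partially ordered sets and monotone maps, with respect to embeddings (order-reflecting injective monotone maps), if and only if P is a complete lattice. -/
universe u

/-! A complete lattice `P` is injective because `f` extends along `m` to its pointwise left Kan
extension `b ↦ ⨆ {f a | m a ≤ b}`. Conversely, extending `id : P → P` along the embedding
`Set.Iic : P → Set P` exhibits `P` as a monotone retract of the complete lattice `Set P`, and a
monotone retract of a complete lattice is complete: the retraction of the join of the image of
`S` is the join of `S`. -/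

section Extension

variable {A B P : Type*} [CompleteLattice P]

def sSupExtend [LE B] (m : A → B) (f : A → P) (b : B) : P :=
  sSup (f '' {a | m a ≤ b})

theorem monotone_sSupExtend [Preorder B] (m : A → B) (f : A → P) : Monotone (sSupExtend m f) :=
  fun _ _ hb => sSup_le_sSup (Set.image_mono fun _ ha => le_trans ha hb)

theorem sSupExtend_comp [Preorder A] [Preorder B] {m : A → B}
    (hm : ∀ a a', m a ≤ m a' → a ≤ a') {f : A → P} (hf : Monotone f) :
    sSupExtend m f ∘ m = f := by
  funext a
  refine le_antisymm (sSup_le ?_) (le_sSup ⟨a, le_rfl, rfl⟩)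
  rintro _ ⟨a', ha', rfl⟩
  exact hf (hm a' a ha')

end Extension

theorem isLUB_retract_sSup_image {P L : Type*} [Preorder P] [CompleteLattice L] {e : L → P}
    {i : P → L} (he : Monotone e) (hi : Monotone i) (hei : Function.LeftInverse e i) (S : Set P) :
    IsLUB S (e (sSup (i '' S))) := by
  refine ⟨fun p hp => ?_, fun q hq => ?_⟩
  · simpa only [hei p] using he (le_sSup (Set.mem_image_of_mem i hp))
  · simpa only [hei q] using he (sSup_le (Set.forall_mem_image.2 fun p hp => hi (hq hp)))

/-- a partially ordered set `P` is injective in the category of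
posets and monotone maps with respect to embeddings (order-reflecting injective
monotone maps) iff `P` is a complete lattice (i.e. its partial order underlies a
complete lattice structure). -/
theorem stmt7 (P : Type u) [inst : PartialOrder P] :
    (∀ (A B : Type u) [PartialOrder A] [PartialOrder B] (m : A → B),
        (∀ a a', a ≤ a' ↔ m a ≤ m a') →
        ∀ f : A → P, Monotone f → ∃ g : B → P, Monotone g ∧ g ∘ m = f) ↔
      ∃ L : CompleteLattice P, L.toPartialOrder = inst := by
  constructor
  · intro hinj
    obtain ⟨r, hr, hrIic⟩ := hinj P (Set P) Set.Iic (fun _ _ => Set.Iic_subset_Iic.symm) id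
      monotone_id
    let _ : SupSet P := ⟨fun S => r (sSup (Set.Iic '' S))⟩
    exact ⟨completeLatticeOfSup P fun S =>
      isLUB_retract_sSup_image hr (fun _ _ => Set.Iic_subset_Iic.2) (congrFun hrIic) S, rfl⟩
  · rintro ⟨L, rfl⟩ A B _ _ m hm f hf
    exact ⟨sSupExtend m f, monotone_sSupExtend m f,
      sSupExtend_comp (fun a a' => (hm a a').2) hf⟩
end

section
/- The category of modest sets over complete lattices is equivalent to the category of partial equilogical objects over complete lattices: the functor sending (A, X, E_A) to (X, ≡_X), where x ≡_X x' iff some a ∈ A has x, x' ∈ E_A(a), and sending a morphism to the class of any of its realizers, is fully faithful and essentially surjective. -/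
universe u

/-- `(A, X, E_A)` is a modest set: all realizer sets are nonempty and distinct
elements have disjoint realizer sets. -/
def ModestSet {A X : Type u} (EA : A → Set X) : Prop :=
  (∀ a, (EA a).Nonempty) ∧ ∀ a a', a ≠ a' → EA a ∩ EA a' = ∅

/-- The monotone map `g` tracks (realizes) the map `f : A → B`. -/
def Tracks {A B X Y : Type u} [Preorder X] [Preorder Y]
    (g : X →o Y) (EA : A → Set X) (EB : B → Set Y) (f : A → B) : Prop :=
  ∀ a, ∀ x ∈ EA a, g x ∈ EB (f a)

/-- The partial equivalence relation on `X` induced by a modest set `(A, X, E_A)`: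
`x ≡ x'` iff some `a ∈ A` has `x, x' ∈ E_A a`. -/
def indRel {A X : Type u} (EA : A → Set X) (x x' : X) : Prop :=
  ∃ a, x ∈ EA a ∧ x' ∈ EA a

lemma ModestSet.eq_of_mem {A X : Type u} {EA : A → Set X} (m : ModestSet EA)
    {a a' : A} {x : X} (h : x ∈ EA a) (h' : x ∈ EA a') : a = a' := by
  by_contra hne
  have := m.2 a a' hne
  exact absurd (Set.mem_inter h h') (by simp [this])

/-- the category of modest sets over complete lattices is
equivalent to the category of partial equilogical objects over complete
lattices: the functor `F` sending `(A, X, E_A)` to `(X, ≡_X)` (with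
`x ≡_X x' ↔ ∃ a, x, x' ∈ E_A a`), and a morphism to the class of any of its
realizers, is well defined, fully faithful and essentially surjective. -/
theorem stmt12 :
    -- F is well defined on morphisms: any two realizers of tracked maps are
    -- equivalent as morphisms of partial equilogical objects
    (∀ (A B X Y : Type u) [CompleteLattice X] [CompleteLattice Y]
        (EA : A → Set X) (EB : B → Set Y), ModestSet EA → ModestSet EB →
        ∀ (f : A → B) (g g' : X →o Y), Tracks g EA EB f → Tracks g' EA EB f →
          ∀ x x', indRel EA x x' → indRel EB (g x) (g' x')) ∧
    -- F is faithful
    (∀ (A B X Y : Type u) [CompleteLattice X] [CompleteLattice Y]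
        (EA : A → Set X) (EB : B → Set Y), ModestSet EA → ModestSet EB →
        ∀ (f f' : A → B) (g g' : X →o Y), Tracks g EA EB f → Tracks g' EA EB f' →
          (∀ x x', indRel EA x x' → indRel EB (g x) (g' x')) → f = f') ∧
    -- F is full: every equivariant monotone map realizes some morphism
    (∀ (A B X Y : Type u) [CompleteLattice X] [CompleteLattice Y]
        (EA : A → Set X) (EB : B → Set Y), ModestSet EA → ModestSet EB →
        ∀ g : X →o Y, (∀ x x', indRel EA x x' → indRel EB (g x) (g x')) →
          ∃ f : A → B, Tracks g EA EB f) ∧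
    -- F is essentially surjective: every partial equilogical object arises from
    -- a modest set
    (∀ (X : Type u) [CompleteLattice X] (per : X → X → Prop),
        (∀ x x', per x x' → per x' x) →
        (∀ x y z, per x y → per y z → per x z) →
        ∃ (A : Type u) (EA : A → Set X), ModestSet EA ∧
          ∀ x x', indRel EA x x' ↔ per x x') := by
  refine ⟨?_, ?_, ?_, ?_⟩
  · rintro A B X Y _ _ EA EB mA mB f g g' hg hg' x x' ⟨a, hx, hx'⟩
    exact ⟨f a, hg a x hx, hg' a x' hx'⟩
  · rintro A B X Y _ _ EA EB mA mB f f' g g' hg hg' h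
    funext a
    obtain ⟨x, hx⟩ := mA.1 a
    obtain ⟨b, hb, hb'⟩ := h x x ⟨a, hx, hx⟩
    exact (mB.eq_of_mem (hg a x hx) hb).trans (mB.eq_of_mem hb' (hg' a x hx))
  · rintro A B X Y _ _ EA EB mA mB g hg
    choose xa hxa using mA.1
    have key : ∀ a, ∃ b, g (xa a) ∈ EB b := fun a => by
      obtain ⟨b, hb, _⟩ := hg (xa a) (xa a) ⟨a, hxa a, hxa a⟩
      exact ⟨b, hb⟩
    choose f hf using key
    refine ⟨f, fun a x hx => ?_⟩
    obtain ⟨b, hb, hb'⟩ := hg (xa a) x ⟨a, hxa a, hx⟩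
    exact (mB.eq_of_mem hb (hf a)) ▸ hb'
  · intro X _ per hsym htrans
    let setoid : Setoid {x : X // per x x} :=
      ⟨fun p q => per p.1 q.1,
        ⟨fun p => p.2, fun h => hsym _ _ h, fun h h' => htrans _ _ _ h h'⟩⟩
    refine ⟨Quotient setoid, fun a => {x | ∃ h : per x x, Quotient.mk setoid ⟨x, h⟩ = a},
      ⟨fun a => ?_, fun a a' hne => ?_⟩, fun x x' => ?_⟩
    · refine Quotient.inductionOn a (fun p => ⟨p.1, p.2, by simp⟩)
    · ext x
      simp only [Set.mem_inter_iff, Set.mem_empty_iff_false, iff_false]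
      rintro ⟨⟨h1, rfl⟩, ⟨h2, h3⟩⟩
      exact hne h3
    · constructor
      · rintro ⟨a, ⟨h1, h2⟩, ⟨h3, h4⟩⟩
        exact Quotient.exact (s := setoid) (h2.trans h4.symm)
      · intro h
        have hx : per x x := htrans _ _ _ h (hsym _ _ h)
        have hx' : per x' x' := htrans _ _ _ (hsym _ _ h) h
        exact ⟨Quotient.mk setoid ⟨x, hx⟩, ⟨hx, rfl⟩,
          ⟨hx', (Quotient.sound (s := setoid) (hsym _ _ h) : _)⟩⟩
end

section
/- In the category of partial equilogical objects over complete lattices, exponentials exist: for objects 𝒳 = (X, ≡_X) and 𝒴 = (Y, ≡_Y), the complete lattice Y^X of monotone maps with the partial equivalence relation α ≡ β iff (x ≡_X x' implies α(x) ≡_Y β(x')), together with the class of the evaluation map, satisfies the universal property of the exponential 𝒴^𝒳. -/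
universe u

/-- The partial equivalence relation on the complete lattice `Y^X = X →o Y` of
monotone maps: `α ≡ β` iff `x ≡_X x'` implies `α x ≡_Y β x'`. -/
def expPer {X Y : Type u} [Preorder X] [Preorder Y]
    (pX : X → X → Prop) (pY : Y → Y → Prop) (α β : X →o Y) : Prop :=
  ∀ x x', pX x x' → pY (α x) (β x')

/-- exponentials exist in the category of partial equilogical
objects over complete lattices: for `𝒳 = (X, ≡_X)` and `𝒴 = (Y, ≡_Y)`, the
complete lattice `Y^X` of monotone maps with the relation `α ≡ β` iff
(`x ≡_X x'` implies `α x ≡_Y β x'`), together with the class of the evaluation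
map, satisfies the universal property of the exponential `𝒴^𝒳`. -/
theorem stmt14 {X Y : Type u} [CompleteLattice X] [CompleteLattice Y]
    (pX : X → X → Prop) (pY : Y → Y → Prop)
    (hXs : ∀ a b, pX a b → pX b a) (hXt : ∀ a b c, pX a b → pX b c → pX a c)
    (hYs : ∀ a b, pY a b → pY b a) (hYt : ∀ a b c, pY a b → pY b c → pY a c) :
    -- `≡` on `Y^X` is a partial equivalence relation
    (∀ α β, expPer pX pY α β → expPer pX pY β α) ∧
    (∀ α β γ, expPer pX pY α β → expPer pX pY β γ → expPer pX pY α γ) ∧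
    -- the evaluation map is monotone and equivariant
    Monotone (fun p : (X →o Y) × X => p.1 p.2) ∧
    (∀ (α β : X →o Y) (x x' : X), expPer pX pY α β → pX x x' → pY (α x) (β x')) ∧
    -- universal property of the exponential
    (∀ (Z : Type u) [CompleteLattice Z] (pZ : Z → Z → Prop),
      (∀ a b, pZ a b → pZ b a) → (∀ a b c, pZ a b → pZ b c → pZ a c) →
      ∀ f : Z × X → Y, Monotone f →
        (∀ z z' x x', pZ z z' → pX x x' → pY (f (z, x)) (f (z', x'))) →
        ∃ fb : Z → (X →o Y), Monotone fb ∧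
          (∀ z z', pZ z z' → expPer pX pY (fb z) (fb z')) ∧
          (∀ z z' x x', pZ z z' → pX x x' → pY (fb z x) (f (z', x'))) ∧
          ∀ f' : Z → (X →o Y), Monotone f' →
            (∀ z z', pZ z z' → expPer pX pY (f' z) (f' z')) →
            (∀ z z' x x', pZ z z' → pX x x' → pY (f' z x) (f (z', x'))) →
            ∀ z z', pZ z z' → expPer pX pY (fb z) (f' z')) := by
  refine ⟨fun α β h x x' hx => hYs _ _ (h x' x (hXs _ _ hx)),
    fun α β γ h1 h2 x x' hx => hYt _ _ _ (h1 x x (hXt _ _ _ hx (hXs _ _ hx)))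
      (h2 x x' hx),
    fun p q hpq => le_trans (hpq.1 p.2) (q.1.monotone hpq.2),
    fun α β x x' h hx => h x x' hx, ?_⟩
  intro Z _ pZ hZs hZt f hf hfe
  refine ⟨fun z => ⟨fun x => f (z, x), fun a b hab => hf ⟨le_refl z, hab⟩⟩,
    fun a b hab => fun x => hf ⟨hab, le_refl x⟩,
    fun z z' hz x x' hx => hfe z z' x x' hz hx,
    fun z z' x x' hz hx => hfe z z' x x' hz hx,
    fun f' hfm hfp hfc z z' hz x x' hx => ?_⟩
  exact hYt _ _ _ (hfe z z x x (hZt _ _ _ hz (hZs _ _ hz)) (hXt _ _ _ hx (hXs _ _ hx)))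
    (hYs _ _ (hfc z' z x' x (hZs _ _ hz) (hXs _ _ hx)))
end
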